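/- For all m ≥ 1 and k ≥ 1, L_m^(k) = {(Λ·f) ∪ Λ↑ : Λ ∈ L_m^(k−1), f : {0,…,m−1} → {0,…,m−1}}. -/

import Mathlib

open Finset

/-- `Π·h`: the vector whose `q`-th entry is the union of the `Π p` over all `p` with `h p = q`. -/
def dotAct {n : ℕ} (Pi : Fin n → Finset ℕ) (h : Fin n → Fin n) : Fin n → Finset ℕ :=
  fun q => (Finset.univ.filter (fun p => h p = q)).biUnion Pi

/-- Entrywise union of two vectors of sets. -/
def vUnion {n : ℕ} (Pi Pi' : Fin n → Finset ℕ) : Fin n → Finset ℕ :=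
  fun q => Pi q ∪ Pi' q

/-- `r = max (π₀ ∪ … ∪ π_{n−1})`. -/
def vMax {n : ℕ} (Pi : Fin n → Finset ℕ) : ℕ :=
  (Finset.univ.sup Pi).sup id

/-- `Π↑`: add `r = max (π₀ ∪ … ∪ π_{n−1})` to every element of every entry. -/
def vUp {n : ℕ} (Pi : Fin n → Finset ℕ) : Fin n → Finset ℕ :=
  fun q => (Pi q).image (· + vMax Pi)

/-- A `k`-EXPcomposition of size `n`: pairwise disjoint entries whose union is `{1,…,2^k}`. -/
def IsEXP {n : ℕ} (k : ℕ) (Pi : Fin n → Finset ℕ) : Prop :=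
  (∀ p q : Fin n, p ≠ q → Disjoint (Pi p) (Pi q)) ∧
    Finset.univ.sup Pi = Finset.Icc 1 (2 ^ k)

/-- A `k`-Rvalid vector of size `n`. -/
def IsRvalid {n : ℕ} (k : ℕ) (ρ : Fin n → Finset ℕ) : Prop :=
  IsEXP k ρ ∧ (∀ p : Fin n, p.val = 0 → 1 ∈ ρ p) ∧
    ∀ k' < k, ∀ i ∈ Finset.Icc 1 (2 ^ k'), ∀ j ∈ Finset.Icc 1 (2 ^ k'),
      (∃ α, i ∈ ρ α ∧ j ∈ ρ α) → ∃ β, i + 2 ^ k' ∈ ρ β ∧ j + 2 ^ k' ∈ ρ β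

/-- A `k`-Lvalid vector of size `m`. -/
def IsLvalid {m : ℕ} (k : ℕ) (lam : Fin m → Finset ℕ) : Prop :=
  IsEXP k lam ∧ (∀ p : Fin m, p.val = 0 → 2 ^ k ∈ lam p) ∧
    ∀ k' < k, ∀ i ∈ Finset.Icc 1 (2 ^ k'), ∀ j ∈ Finset.Icc 1 (2 ^ k'),
      (∃ α, 2 ^ k + 1 - i ∈ lam α ∧ 2 ^ k + 1 - j ∈ lam α) →
        ∃ β, 2 ^ k + 1 - (i + 2 ^ k') ∈ lam β ∧ 2 ^ k + 1 - (j + 2 ^ k') ∈ lam β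

/-- Number of nonempty entries of a vector of sets. -/
def nne {n : ℕ} (Pi : Fin n → Finset ℕ) : ℕ :=
  (Finset.univ.filter (fun q => Pi q ≠ ∅)).card

/-- `succ(P) = {P ∪ (P·g)↑ : g}`. -/
def succSet {n : ℕ} (P : Fin n → Finset ℕ) : Finset (Fin n → Finset ℕ) :=
  (Finset.univ : Finset (Fin n → Fin n)).image (fun g => vUnion P (vUp (dotAct P g)))

/-- The graded set `U_{m,n}^{(k)}` of U-pairs. -/
def Uset (m n : ℕ) : ℕ → Set ((Fin m → Finset ℕ) × (Fin n → Finset ℕ))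
  | 0 => {x | x = (fun p => if p.val = 0 then {1} else ∅,
                   fun q => if q.val = 0 then {1} else ∅)}
  | k + 1 => {x | ∃ L P, (L, P) ∈ Uset m n k ∧ ∃ (f : Fin m → Fin m) (g : Fin n → Fin n),
      x = (vUnion (dotAct L f) (vUp L), vUnion P (vUp (dotAct P g)))}

/-- The `r`-Stirling number: partitions of `{1,…,a}` into `b` nonempty blocks
with `1,…,r` in pairwise distinct blocks. -/
noncomputable def rStirling (a b r : ℕ) : ℕ :=
  Set.ncard {C : Finset (Finset ℕ) |
    C.card = b ∧ (∅ ∉ C) ∧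
    (∀ B ∈ C, ∀ B' ∈ C, B ≠ B' → Disjoint B B') ∧
    C.sup id = Finset.Icc 1 a ∧
    ∀ x ∈ Finset.Icc 1 r, ∀ y ∈ Finset.Icc 1 r, x ≠ y →
      ∀ B ∈ C, x ∈ B → y ∉ B}

/-- The Stirling number of the second kind: the number of partitions of an
`a`-element set into `b` nonempty blocks. -/
noncomputable def stirling2 (a b : ℕ) : ℕ := rStirling a b 0

/-- The entry `s_n^{(i,j)}` (with `1 ≤ i,j ≤ n`). -/
noncomputable def sEntry (n i j : ℕ) : ℕ :=
  if i ≤ j then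
    (j - i).factorial * Nat.choose (n - i) (j - i) *
      ∑ α ∈ Finset.Icc (j - i) i, Nat.choose i α * i ^ (i - α) * stirling2 α (j - i)
  else 0

/-- The matrix `S_n`, with rows and columns indexed by `{1,…,n}`. -/
noncomputable def Smat (n : ℕ) : Matrix (Fin n) (Fin n) ℕ :=
  fun i j => sEntry n (i.val + 1) (j.val + 1)

/-- One step of the shuffle-automaton action on subsets of the grid. -/
def stepE {m n : ℕ} (E : Finset (Fin m × Fin n)) (f : Fin m → Fin m) (g : Fin n → Fin n) :
    Finset (Fin m × Fin n) :=
  E.image (fun p => (f p.1, p.2)) ∪ E.image (fun p => (p.1, g p.2))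

/-- Reachability from `{(0,0)}` by finitely many steps. -/
def Reach {m n : ℕ} (hm : 0 < m) (hn : 0 < n) (E : Finset (Fin m × Fin n)) : Prop :=
  Relation.ReflTransGen (fun E1 E2 => ∃ f g, E2 = stepE E1 f g)
    {(⟨0, hm⟩, ⟨0, hn⟩)} E

/-- Reachability from `{(0,0)}` in at most `t` steps. -/
def ReachIn {m n : ℕ} (hm : 0 < m) (hn : 0 < n) :
    ℕ → Finset (Fin m × Fin n) → Prop
  | 0, E => E = {(⟨0, hm⟩, ⟨0, hn⟩)}
  | t + 1, E => ReachIn hm hn t E ∨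
      ∃ E' f g, ReachIn hm hn t E' ∧ E = stepE E' f g

/-- `s(Λ,P) = {(i,j) : λ_i ∩ ρ_j ≠ ∅}`. -/
def sTab {m n : ℕ} (L : Fin m → Finset ℕ) (P : Fin n → Finset ℕ) :
    Finset (Fin m × Fin n) :=
  Finset.univ.filter (fun p => (L p.1 ∩ P p.2).Nonempty)

/-!
Write `N = 2^k`. A `(k+1)`-Lvalid vector `λ` splits at `N`: its upper half shifted down by `N`
is a `k`-Lvalid vector `Λ`, because every shift condition of level `k' < k` only involves
elements above `N`. The remaining condition, of level `k`, says exactly that each entry of `Λ`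
lies inside a single entry `λ_{f α}` of `λ`, which makes the lower half of `λ` equal to `Λ·f`.
Conversely every `Λ·f ∪ Λ↑` with `Λ` `k`-Lvalid passes these tests.
-/

variable {m : ℕ}

section EXPcomposition

variable {k : ℕ} {Pi : Fin m → Finset ℕ}

lemma isEXP_iff : IsEXP k Pi ↔
    (∀ x, x ∈ Icc 1 (2 ^ k) ↔ ∃ q, x ∈ Pi q) ∧ ∀ x p q, x ∈ Pi p → x ∈ Pi q → p = q := by
  simp only [IsEXP, Finset.ext_iff, Finset.mem_sup, Finset.mem_univ, true_and,
    Finset.disjoint_left]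
  constructor
  · rintro ⟨hdisj, hsup⟩
    exact ⟨fun x => (hsup x).symm, fun x p q hp hq => by_contra fun hpq => hdisj p q hpq hp hq⟩
  · rintro ⟨hsup, huniq⟩
    exact ⟨fun p q hpq x hp hq => hpq (huniq x p q hp hq), fun x => (hsup x).symm⟩

lemma IsEXP.mem_Icc (h : IsEXP k Pi) {x : ℕ} {q : Fin m} (hx : x ∈ Pi q) :
    1 ≤ x ∧ x ≤ 2 ^ k :=
  Finset.mem_Icc.mp (((isEXP_iff.mp h).1 x).mpr ⟨q, hx⟩)

lemma IsEXP.exists_mem (h : IsEXP k Pi) {x : ℕ} (h₁ : 1 ≤ x) (h₂ : x ≤ 2 ^ k) :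
    ∃ q, x ∈ Pi q :=
  ((isEXP_iff.mp h).1 x).mp (Finset.mem_Icc.mpr ⟨h₁, h₂⟩)

lemma IsEXP.eq_of_mem (h : IsEXP k Pi) {x : ℕ} {p q : Fin m} (hp : x ∈ Pi p) (hq : x ∈ Pi q) :
    p = q :=
  (isEXP_iff.mp h).2 x p q hp hq

lemma IsEXP.vMax_eq (h : IsEXP k Pi) : vMax Pi = 2 ^ k := by
  rw [vMax, h.2]
  exact le_antisymm (Finset.sup_le fun x hx => (Finset.mem_Icc.mp hx).2)
    (Finset.le_sup (f := id) (Finset.mem_Icc.mpr ⟨Nat.one_le_two_pow, le_rfl⟩))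

end EXPcomposition

lemma mem_dotAct {L : Fin m → Finset ℕ} {f : Fin m → Fin m} {q : Fin m} {x : ℕ} :
    x ∈ dotAct L f q ↔ ∃ p, f p = q ∧ x ∈ L p := by
  simp [dotAct]

lemma mem_vUnion_dotAct_vUp {L : Fin m → Finset ℕ} {f : Fin m → Fin m} {q : Fin m} {x : ℕ} :
    x ∈ vUnion (dotAct L f) (vUp L) q ↔ (∃ p, f p = q ∧ x ∈ L p) ∨ ∃ y ∈ L q, y + vMax L = x := by
  simp [vUnion, vUp, mem_dotAct]

def SameEntry (lam : Fin m → Finset ℕ) (a b : ℕ) : Prop :=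
  ∃ α, a ∈ lam α ∧ b ∈ lam α

/-- The recursive clause of `IsLvalid` for `T = 2^k` and `s = 2^k'`, with `a = T + 1 - i`. -/
def ShiftClosed (T s : ℕ) (lam : Fin m → Finset ℕ) : Prop :=
  ∀ a b, T < a + s → T < b + s → SameEntry lam a b → SameEntry lam (a - s) (b - s)

lemma isLvalid_iff {k : ℕ} {lam : Fin m → Finset ℕ} : IsLvalid k lam ↔
    IsEXP k lam ∧ (∀ p : Fin m, p.val = 0 → 2 ^ k ∈ lam p) ∧
      ∀ k' < k, ShiftClosed (2 ^ k) (2 ^ k') lam := by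
  refine and_congr_right fun hE => and_congr_right fun _ => forall₂_congr fun k' hk' => ?_
  have hs : 2 ^ k' < 2 ^ k := Nat.pow_lt_pow_right (by norm_num) hk'
  constructor
  · rintro h a b ha hb ⟨α, haα, hbα⟩
    have ha' := hE.mem_Icc haα
    have hb' := hE.mem_Icc hbα
    have ea : 2 ^ k + 1 - (2 ^ k + 1 - a) = a := by omega
    have eb : 2 ^ k + 1 - (2 ^ k + 1 - b) = b := by omega
    obtain ⟨β, h₁, h₂⟩ := h (2 ^ k + 1 - a) (Finset.mem_Icc.mpr (by omega))
      (2 ^ k + 1 - b) (Finset.mem_Icc.mpr (by omega)) ⟨α, by rwa [ea], by rwa [eb]⟩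
    rw [Nat.sub_add_eq, ea] at h₁
    rw [Nat.sub_add_eq, eb] at h₂
    exact ⟨β, h₁, h₂⟩
  · intro h i hi j hj hij
    simp only [Finset.mem_Icc] at hi hj
    simp only [Nat.sub_add_eq]
    exact h _ _ (by omega) (by omega) hij

section ShiftDown

def vShiftDown (N : ℕ) (lam : Fin m → Finset ℕ) : Fin m → Finset ℕ :=
  fun q => (Icc 1 N).filter (· + N ∈ lam q)

variable {N : ℕ} {lam : Fin m → Finset ℕ}

@[simp]
lemma mem_vShiftDown {q : Fin m} {y : ℕ} :
    y ∈ vShiftDown N lam q ↔ (1 ≤ y ∧ y ≤ N) ∧ y + N ∈ lam q := by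
  simp [vShiftDown]

lemma sameEntry_vShiftDown {y y' : ℕ} :
    SameEntry (vShiftDown N lam) y y' ↔
      (1 ≤ y ∧ y ≤ N) ∧ (1 ≤ y' ∧ y' ≤ N) ∧ SameEntry lam (y + N) (y' + N) := by
  simp only [SameEntry, mem_vShiftDown]
  constructor
  · rintro ⟨α, ⟨hy, hyα⟩, hy', hy'α⟩
    exact ⟨hy, hy', α, hyα, hy'α⟩
  · rintro ⟨hy, hy', α, hyα, hy'α⟩
    exact ⟨α, ⟨hy, hyα⟩, hy', hy'α⟩

variable {k : ℕ}

lemma IsEXP.vShiftDown (h : IsEXP (k + 1) lam) : IsEXP k (vShiftDown (2 ^ k) lam) := by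
  have hT : 2 ^ (k + 1) = 2 ^ k * 2 := pow_succ 2 k
  refine isEXP_iff.mpr ⟨fun x => ⟨fun hx => ?_, ?_⟩, fun x p q hp hq => ?_⟩
  · obtain ⟨hx₁, hx₂⟩ := Finset.mem_Icc.mp hx
    obtain ⟨q, hq⟩ := h.exists_mem (x := x + 2 ^ k) (by omega) (by omega)
    exact ⟨q, mem_vShiftDown.mpr ⟨⟨hx₁, hx₂⟩, hq⟩⟩
  · rintro ⟨q, hq⟩
    exact Finset.mem_Icc.mpr (mem_vShiftDown.mp hq).1
  · exact h.eq_of_mem (mem_vShiftDown.mp hp).2 (mem_vShiftDown.mp hq).2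

lemma shiftClosed_vShiftDown_iff (h : IsEXP (k + 1) lam) {s : ℕ} (hs : 2 * s ≤ 2 ^ k) :
    ShiftClosed (2 ^ k) s (vShiftDown (2 ^ k) lam) ↔ ShiftClosed (2 ^ (k + 1)) s lam := by
  have hT : 2 ^ (k + 1) = 2 ^ k * 2 := pow_succ 2 k
  rw [hT]
  constructor
  · rintro hdown a b ha hb hab
    obtain ⟨α, haα, hbα⟩ := hab
    have ha' := h.mem_Icc haα
    have hb' := h.mem_Icc hbα
    have hsame : SameEntry (vShiftDown (2 ^ k) lam) (a - 2 ^ k) (b - 2 ^ k) :=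
      sameEntry_vShiftDown.mpr ⟨by omega, by omega,
        α, by rwa [Nat.sub_add_cancel (by omega)], by rwa [Nat.sub_add_cancel (by omega)]⟩
    obtain ⟨-, -, hres⟩ := sameEntry_vShiftDown.mp (hdown _ _ (by omega) (by omega) hsame)
    rwa [show a - 2 ^ k - s + 2 ^ k = a - s by omega,
      show b - 2 ^ k - s + 2 ^ k = b - s by omega] at hres
  · rintro hlam y y' hy hy' hyy'
    obtain ⟨hy₁, hy'₁, hsame⟩ := sameEntry_vShiftDown.mp hyy'
    have hres := hlam _ _ (by omega) (by omega) hsame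
    rw [show y + 2 ^ k - s = y - s + 2 ^ k by omega,
      show y' + 2 ^ k - s = y' - s + 2 ^ k by omega] at hres
    exact sameEntry_vShiftDown.mpr ⟨by omega, by omega, hres⟩

lemma exists_vShiftDown_subset (h : IsEXP (k + 1) lam)
    (hshift : ShiftClosed (2 ^ (k + 1)) (2 ^ k) lam) :
    ∃ f : Fin m → Fin m, ∀ α, vShiftDown (2 ^ k) lam α ⊆ lam (f α) := by
  have hT : 2 ^ (k + 1) = 2 ^ k * 2 := pow_succ 2 k
  rw [hT] at hshift
  suffices ∀ α, ∃ β, vShiftDown (2 ^ k) lam α ⊆ lam β from ⟨fun α => (this α).choose,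
    fun α => (this α).choose_spec⟩
  intro α
  rcases (vShiftDown (2 ^ k) lam α).eq_empty_or_nonempty with hempty | ⟨y₀, hy₀⟩
  · exact ⟨α, hempty ▸ Finset.empty_subset _⟩
  obtain ⟨hy₀N, hy₀α⟩ := mem_vShiftDown.mp hy₀
  obtain ⟨β, hβ⟩ := h.exists_mem (x := y₀) hy₀N.1 (by omega)
  refine ⟨β, fun y hy => ?_⟩
  obtain ⟨hyN, hyα⟩ := mem_vShiftDown.mp hy
  obtain ⟨γ, hy₀γ, hyγ⟩ := hshift _ _ (by omega) (by omega) ⟨α, hy₀α, hyα⟩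
  rw [Nat.add_sub_cancel] at hy₀γ hyγ
  exact h.eq_of_mem hy₀γ hβ ▸ hyγ

lemma eq_vUnion_dotAct_vUp_vShiftDown (h : IsEXP (k + 1) lam) {f : Fin m → Fin m}
    (hf : ∀ α, vShiftDown (2 ^ k) lam α ⊆ lam (f α)) :
    lam = vUnion (dotAct (vShiftDown (2 ^ k) lam) f) (vUp (vShiftDown (2 ^ k) lam)) := by
  have hT : 2 ^ (k + 1) = 2 ^ k * 2 := pow_succ 2 k
  funext q
  ext x
  rw [mem_vUnion_dotAct_vUp, h.vShiftDown.vMax_eq]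
  constructor
  · intro hx
    have hx' := h.mem_Icc hx
    by_cases hxN : x ≤ 2 ^ k
    · obtain ⟨α, hα⟩ := h.exists_mem (x := x + 2 ^ k) (by omega) (by omega)
      have hxα : x ∈ vShiftDown (2 ^ k) lam α := mem_vShiftDown.mpr ⟨⟨hx'.1, hxN⟩, hα⟩
      exact Or.inl ⟨α, h.eq_of_mem (hf α hxα) hx, hxα⟩
    · refine Or.inr ⟨x - 2 ^ k, mem_vShiftDown.mpr ⟨by omega, ?_⟩, by omega⟩
      rwa [Nat.sub_add_cancel (by omega)]
  · rintro (⟨p, rfl, hp⟩ | ⟨y, hy, rfl⟩)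
    · exact hf p hp
    · exact (mem_vShiftDown.mp hy).2

end ShiftDown

section Extension

variable {k : ℕ} {L : Fin m → Finset ℕ}

lemma vShiftDown_vUnion_dotAct_vUp (hL : IsEXP k L) (f : Fin m → Fin m) :
    vShiftDown (2 ^ k) (vUnion (dotAct L f) (vUp L)) = L := by
  funext q
  ext y
  rw [mem_vShiftDown, mem_vUnion_dotAct_vUp, hL.vMax_eq]
  constructor
  · rintro ⟨hy, ⟨p, -, hp⟩ | ⟨y', hy', hyy'⟩⟩
    · have := hL.mem_Icc hp
      omega
    · rwa [← Nat.add_right_cancel hyy']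
  · intro hy
    exact ⟨hL.mem_Icc hy, Or.inr ⟨y, hy, rfl⟩⟩

lemma IsEXP.vUnion_dotAct_vUp (hL : IsEXP k L) (f : Fin m → Fin m) :
    IsEXP (k + 1) (vUnion (dotAct L f) (vUp L)) := by
  refine isEXP_iff.mpr ⟨fun x => ?_, fun x p q hp hq => ?_⟩
  · simp only [mem_vUnion_dotAct_vUp, hL.vMax_eq, Finset.mem_Icc, pow_succ]
    constructor
    · rintro ⟨hx₁, hx₂⟩
      by_cases hxN : x ≤ 2 ^ k
      · obtain ⟨p, hp⟩ := hL.exists_mem hx₁ hxN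
        exact ⟨f p, Or.inl ⟨p, rfl, hp⟩⟩
      · obtain ⟨q, hq⟩ := hL.exists_mem (x := x - 2 ^ k) (by omega) (by omega)
        exact ⟨q, Or.inr ⟨x - 2 ^ k, hq, by omega⟩⟩
    · rintro ⟨q, ⟨p, -, hp⟩ | ⟨y, hy, rfl⟩⟩
      · have := hL.mem_Icc hp
        omega
      · have := hL.mem_Icc hy
        omega
  · rw [mem_vUnion_dotAct_vUp, hL.vMax_eq] at hp hq
    rcases hp with ⟨a, rfl, ha⟩ | ⟨y, hy, rfl⟩ <;> rcases hq with ⟨b, rfl, hb⟩ | ⟨y', hy', hyy'⟩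
    · rw [hL.eq_of_mem ha hb]
    · have := hL.mem_Icc ha
      have := hL.mem_Icc hy'
      omega
    · have := hL.mem_Icc hy
      have := hL.mem_Icc hb
      omega
    · exact hL.eq_of_mem hy (Nat.add_right_cancel hyy' ▸ hy')

lemma shiftClosed_vUnion_dotAct_vUp (hL : IsEXP k L) (f : Fin m → Fin m) :
    ShiftClosed (2 ^ (k + 1)) (2 ^ k) (vUnion (dotAct L f) (vUp L)) := by
  have hE := hL.vUnion_dotAct_vUp f
  rintro a b ha hb ⟨q, haq, hbq⟩
  have ha' := hE.mem_Icc haq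
  have hb' := hE.mem_Icc hbq
  rw [pow_succ] at ha hb ha' hb'
  have hmem : ∀ x, 2 ^ k < x → x ≤ 2 ^ k * 2 → x ∈ vUnion (dotAct L f) (vUp L) q →
      x - 2 ^ k ∈ dotAct L f (f q) := by
    intro x hx₁ hx₂ hx
    have hdown : x - 2 ^ k ∈ vShiftDown (2 ^ k) (vUnion (dotAct L f) (vUp L)) q :=
      mem_vShiftDown.mpr ⟨by omega, by rwa [Nat.sub_add_cancel hx₁.le]⟩
    rw [vShiftDown_vUnion_dotAct_vUp hL] at hdown
    exact mem_dotAct.mpr ⟨q, rfl, hdown⟩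
  exact ⟨f q, Finset.mem_union_left _ (hmem a (by omega) ha'.2 haq),
    Finset.mem_union_left _ (hmem b (by omega) hb'.2 hbq)⟩

end Extension

section Recursion

variable {k : ℕ}

theorem IsLvalid.exists_eq_vUnion_dotAct_vUp {lam : Fin m → Finset ℕ}
    (h : IsLvalid (k + 1) lam) :
    ∃ (L : Fin m → Finset ℕ) (f : Fin m → Fin m),
      IsLvalid k L ∧ lam = vUnion (dotAct L f) (vUp L) := by
  obtain ⟨hE, htop, hshift⟩ := isLvalid_iff.mp h
  obtain ⟨f, hf⟩ := exists_vShiftDown_subset hE (hshift k k.lt_succ_self)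
  refine ⟨_, f, isLvalid_iff.mpr ⟨hE.vShiftDown, fun p hp => ?_, fun k' hk' => ?_⟩,
    eq_vUnion_dotAct_vUp_vShiftDown hE hf⟩
  · have := htop p hp
    rw [pow_succ, mul_two] at this
    exact mem_vShiftDown.mpr ⟨⟨Nat.one_le_two_pow, le_rfl⟩, this⟩
  · refine (shiftClosed_vShiftDown_iff hE ?_).mpr (hshift k' (by omega))
    rw [← pow_succ']
    exact Nat.pow_le_pow_right (by norm_num) hk'

theorem IsLvalid.vUnion_dotAct_vUp {L : Fin m → Finset ℕ} (hL : IsLvalid k L)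
    (f : Fin m → Fin m) : IsLvalid (k + 1) (vUnion (dotAct L f) (vUp L)) := by
  obtain ⟨hE, htop, hshift⟩ := isLvalid_iff.mp hL
  have hE' := hE.vUnion_dotAct_vUp f
  refine isLvalid_iff.mpr ⟨hE', fun p hp => ?_, fun k' hk' => ?_⟩
  · rw [mem_vUnion_dotAct_vUp, hE.vMax_eq, pow_succ, mul_two]
    exact Or.inr ⟨2 ^ k, htop p hp, rfl⟩
  rcases Nat.lt_succ_iff_lt_or_eq.mp hk' with hk' | rfl
  · have hs : 2 * 2 ^ k' ≤ 2 ^ k := by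
      rw [← pow_succ']
      exact Nat.pow_le_pow_right (by norm_num) hk'
    rw [← shiftClosed_vShiftDown_iff hE' hs, vShiftDown_vUnion_dotAct_vUp hE]
    exact hshift k' hk'
  · exact shiftClosed_vUnion_dotAct_vUp hE f

end Recursion

theorem stmt2_general (m k : ℕ) (hk : 1 ≤ k) :
    {lam : Fin m → Finset ℕ | IsLvalid k lam} =
      {lam' : Fin m → Finset ℕ | ∃ (L : Fin m → Finset ℕ) (f : Fin m → Fin m),
        IsLvalid (k - 1) L ∧ lam' = vUnion (dotAct L f) (vUp L)} := by
  obtain ⟨k, rfl⟩ := Nat.exists_eq_add_of_le' hk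
  ext lam
  simp only [Set.mem_ofPred_eq, Nat.add_sub_cancel]
  constructor
  · exact IsLvalid.exists_eq_vUnion_dotAct_vUp
  · rintro ⟨L, f, hL, rfl⟩
    exact hL.vUnion_dotAct_vUp f

theorem stmt2 (m k : ℕ) (hm : 1 ≤ m) (hk : 1 ≤ k) :
    {lam : Fin m → Finset ℕ | IsLvalid k lam} =
      {lam' : Fin m → Finset ℕ | ∃ (L : Fin m → Finset ℕ) (f : Fin m → Fin m),
        IsLvalid (k - 1) L ∧ lam' = vUnion (dotAct L f) (vUp L)} :=
  stmt2_general m k hk
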